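/- With r := 4/p², the constant κ := max over e' ∈ E of (1/c(e'))·Σ_{e∈E} c(e)·r^{−d(e,e')} satisfies κ ≤ 4/3. -/

import Mathlib

/-!
Fix `e'` and group the edges by their distance `k` to `e'`. An edge at distance `k + 1` ending
at `b` is followed by an edge at distance `k` leaving `b`. By reversibility the edges into `b`
carry total weight at most `π(b) Q(b)`, while every edge leaving `b` carries at least
`p π(b) Q(b)`. Hence the `k`-th shell weighs at most `c(e') p⁻ᵏ`, and against
`r⁻ᵏ = (p² / 4)ᵏ` the sum is dominated by `c(e')` times a geometric series of ratio
`p / 4 ≤ 1 / 4`, which is at most `4 / 3`.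
-/

open Finset

noncomputable section

variable {X : Type*} [Fintype X] [DecidableEq X] [Nonempty X]

/-- Dirichlet form `E(f,g) = (1/2) ∑_{x,y} π(x) Q(x,y) (f(x)-f(y))(g(x)-g(y))`. -/
def dirichletForm (π : X → ℝ) (Q : X → X → ℝ) (f g : X → ℝ) : ℝ :=
  (1 / 2) * ∑ x : X, ∑ y : X, π x * Q x y * (f x - f y) * (g x - g y)

/-- Mean `E[f] = ∑_x π(x) f(x)`. -/
def mean (π : X → ℝ) (f : X → ℝ) : ℝ := ∑ x : X, π x * f x

/-- Entropy `Ent(f) = E[f log f] - E[f] log E[f]`. -/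
def entropy (π : X → ℝ) (f : X → ℝ) : ℝ :=
  mean π (fun x => f x * Real.log (f x)) - mean π f * Real.log (mean π f)

/-- Variance `Var(f) = E[f²] - E[f]²`. -/
def variance (π : X → ℝ) (f : X → ℝ) : ℝ :=
  mean π (fun x => f x ^ 2) - (mean π f) ^ 2

/-- Total jump rate `Q(x) = ∑_{y ≠ x} Q(x,y)`. -/
def jumpRate (Q : X → X → ℝ) (x : X) : ℝ := ∑ y ∈ univ.erase x, Q x y

/-- Sparsity parameter `p = min_{(x,y) ∈ E} Q(x,y) / max(Q(x), Q(y,x))`. -/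
def sparsity (Q : X → X → ℝ) : ℝ :=
  sInf {s : ℝ | ∃ x y : X, x ≠ y ∧ 0 < Q x y ∧
    s = Q x y / max (jumpRate Q x) (Q y x)}

/-- The transition graph `(X, E)` (symmetric since under reversibility
`Q(x,y) > 0 ↔ Q(y,x) > 0`). -/
def chainGraph (Q : X → X → ℝ) : SimpleGraph X where
  Adj x y := x ≠ y ∧ (0 < Q x y ∨ 0 < Q y x)
  symm := by constructor; intro x y h; exact ⟨h.1.symm, h.2.symm⟩
  loopless := by constructor; intro x h; exact h.1 rfl

/-- Graph distance on `(X, E)`. -/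
def graphDist (Q : X → X → ℝ) (x y : X) : ℕ := (chainGraph Q).dist x y

/-- Regularization `f⋆(x) = max_z r^{-d(x,z)} f(z)`. -/
def fStar (Q : X → X → ℝ) (r : ℝ) (f : X → ℝ) (x : X) : ℝ :=
  univ.sup' univ_nonempty (fun z => r ^ (-(graphDist Q x z : ℤ)) * f z)

/-- `(x,y)` is an allowed transition. -/
def IsEdge (Q : X → X → ℝ) (e : X × X) : Prop := e.1 ≠ e.2 ∧ 0 < Q e.1 e.2

/-- The edge set `E = {(x,y) : x ≠ y, Q(x,y) > 0}` as a finset. -/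
def edges (Q : X → X → ℝ) : Finset (X × X) :=
  univ.filter (fun e => e.1 ≠ e.2 ∧ 0 < Q e.1 e.2)

/-- Edge weight `c(x,y) = π(x) Q(x,y)`. -/
def edgeWeight (π : X → ℝ) (Q : X → X → ℝ) (e : X × X) : ℝ := π e.1 * Q e.1 e.2

/-- Distance between edges: `d(e,e') = ℓ - 1` where `ℓ` is the minimal length of a
path `(x_0, …, x_ℓ)` with `(x_0,x_1) = e` and `(x_{ℓ-1}, x_ℓ) = e'`. -/
def edgeDist (Q : X → X → ℝ) (e e' : X × X) : ℕ :=
  sInf {n : ℕ | ∃ c : ℕ → X, c 0 = e.1 ∧ c 1 = e.2 ∧ c n = e'.1 ∧ c (n + 1) = e'.2 ∧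
    ∀ i < n + 1, (chainGraph Q).Adj (c i) (c (i + 1))}

/-- `κ = max_{e' ∈ E} (1/c(e')) ∑_{e ∈ E} c(e) r^{-d(e,e')}`. -/
def kappa (π : X → ℝ) (Q : X → X → ℝ) (r : ℝ) : ℝ :=
  sSup {k : ℝ | ∃ e' ∈ edges Q, k = (1 / edgeWeight π Q e') *
    ∑ e ∈ edges Q, edgeWeight π Q e * r ^ (-(edgeDist Q e e' : ℤ))}

/-- `H(w) = ((√w + 1)/(√w - 1)) log w` for `w ≠ 1`, and `H(1) = 4`. -/
def Hfun (w : ℝ) : ℝ :=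
  if w = 1 then 4 else ((Real.sqrt w + 1) / (Real.sqrt w - 1)) * Real.log w

/-- A function is `r`-regular if `f(x) ≤ r f(y)` across every edge. -/
def IsRRegular (Q : X → X → ℝ) (r : ℝ) (f : X → ℝ) : Prop :=
  ∀ x y : X, x ≠ y → 0 < Q x y → f x ≤ r * f y

/-- Maximum degree of the graph `(X, E)`. -/
def maxDegree (Q : X → X → ℝ) : ℕ :=
  univ.sup (fun x : X => Nat.card {y : X // (chainGraph Q).Adj x y})

/-- Irreducibility: every state can be reached from every other through allowed
transitions. -/
def MarkovIrreducible (Q : X → X → ℝ) : Prop :=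
  ∀ x y : X, Relation.ReflTransGen (fun a b => a ≠ b ∧ 0 < Q a b) x y

end

theorem sum_mul_zpow_neg_le_of_sum_fiber_le {ι : Type*} (s : Finset ι) (w : ι → ℝ) (d : ι → ℕ)
    {A a r : ℝ} (hA : 0 ≤ A) (ha : 0 ≤ a) (har : a < r)
    (h : ∀ k, ∑ i ∈ s with d i = k, w i ≤ A * a ^ k) :
    ∑ i ∈ s, w i * r ^ (-(d i : ℤ)) ≤ A / (1 - a / r) := by
  have hr : 0 < r := ha.trans_lt har
  have hq : 0 ≤ a / r := div_nonneg ha hr.le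
  have hq1 : a / r < 1 := (div_lt_one hr).2 har
  calc ∑ i ∈ s, w i * r ^ (-(d i : ℤ))
      = ∑ k ∈ s.image d, (∑ i ∈ s with d i = k, w i) * r⁻¹ ^ k := by
        rw [← sum_fiberwise_of_maps_to fun i hi => mem_image_of_mem d hi]
        refine sum_congr rfl fun k _ => ?_
        rw [sum_mul]
        refine sum_congr rfl fun i hi => ?_
        rw [(mem_filter.1 hi).2, zpow_neg, zpow_natCast, inv_pow]
    _ ≤ ∑ k ∈ s.image d, A * (a / r) ^ k := sum_le_sum fun k _ => by
        rw [div_eq_mul_inv, mul_pow, ← mul_assoc]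
        exact mul_le_mul_of_nonneg_right (h k) (by positivity)
    _ ≤ A * (1 - a / r)⁻¹ := by
        rw [← mul_sum, ← tsum_geometric_of_lt_one hq hq1]
        exact mul_le_mul_of_nonneg_left ((summable_geometric_of_lt_one hq hq1).sum_le_tsum _
          fun k _ => pow_nonneg hq k) hA
    _ = A / (1 - a / r) := (div_eq_mul_inv _ _).symm

section EdgeChain

variable {X : Type*} {Q : X → X → ℝ} {e e' f : X × X} {n : ℕ}

/-- The walks over which `edgeDist` takes its infimum. -/
def IsEdgeChain (Q : X → X → ℝ) (e e' : X × X) (n : ℕ) : Prop :=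
  ∃ c : ℕ → X, c 0 = e.1 ∧ c 1 = e.2 ∧ c n = e'.1 ∧ c (n + 1) = e'.2 ∧
    ∀ i < n + 1, (chainGraph Q).Adj (c i) (c (i + 1))

lemma IsEdgeChain.refl (he : (chainGraph Q).Adj e.1 e.2) : IsEdgeChain Q e e 0 :=
  ⟨fun i => if i = 0 then e.1 else e.2, rfl, rfl, rfl, rfl, by simpa using he⟩

lemma IsEdgeChain.cons (he : (chainGraph Q).Adj e.1 e.2) (hef : e.2 = f.1)
    (h : IsEdgeChain Q f e' n) : IsEdgeChain Q e e' (n + 1) := by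
  obtain ⟨c, h0, h1, hn, hn1, hadj⟩ := h
  refine ⟨fun | 0 => e.1 | i + 1 => c i, rfl, h0.trans hef.symm, hn, hn1, ?_⟩
  rintro (_ | i) hi
  · simpa [h0, ← hef] using he
  · exact hadj i (by omega)

lemma IsEdgeChain.tail (h : IsEdgeChain Q e e' (n + 1)) :
    ∃ f, (chainGraph Q).Adj f.1 f.2 ∧ f.1 = e.2 ∧ IsEdgeChain Q f e' n := by
  obtain ⟨c, h0, h1, hn, hn1, hadj⟩ := h
  exact ⟨(c 1, c 2), hadj 1 (by omega), h1,
    fun i => c (i + 1), rfl, rfl, hn, hn1, fun i hi => hadj (i + 1) (by omega)⟩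

lemma IsEdgeChain.eq_of_zero (h : IsEdgeChain Q e e' 0) : e = e' := by
  obtain ⟨c, h0, h1, h0', h1', -⟩ := h
  exact Prod.ext (h0.symm.trans h0') (h1.symm.trans h1')

lemma exists_isEdgeChain (hirr : MarkovIrreducible Q) (he : (chainGraph Q).Adj e.1 e.2)
    (he' : (chainGraph Q).Adj e'.1 e'.2) : ∃ n, IsEdgeChain Q e e' n := by
  suffices ∀ a, Relation.ReflTransGen (fun a b => a ≠ b ∧ 0 < Q a b) a e'.1 →
      ∀ e : X × X, (chainGraph Q).Adj e.1 e.2 → e.2 = a → ∃ n, IsEdgeChain Q e e' n from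
    this _ (hirr e.2 e'.1) e he rfl
  intro a hreach
  induction hreach using Relation.ReflTransGen.head_induction_on with
  | refl => exact fun e he hea => ⟨1, (IsEdgeChain.refl he').cons he hea⟩
  | @head a b hab _ ih =>
    intro e he hea
    obtain ⟨n, hn⟩ := ih (a, b) ⟨hab.1, Or.inl hab.2⟩ rfl
    exact ⟨n + 1, hn.cons he hea⟩

lemma edgeDist_le (h : IsEdgeChain Q e e' n) : edgeDist Q e e' ≤ n :=
  Nat.sInf_le h

lemma isEdgeChain_edgeDist (hirr : MarkovIrreducible Q) (he : (chainGraph Q).Adj e.1 e.2)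
    (he' : (chainGraph Q).Adj e'.1 e'.2) : IsEdgeChain Q e e' (edgeDist Q e e') :=
  Nat.sInf_mem (exists_isEdgeChain hirr he he')

lemma eq_of_edgeDist_eq_zero (hirr : MarkovIrreducible Q) (he : (chainGraph Q).Adj e.1 e.2)
    (he' : (chainGraph Q).Adj e'.1 e'.2) (h : edgeDist Q e e' = 0) : e = e' :=
  (h ▸ isEdgeChain_edgeDist hirr he he').eq_of_zero

lemma exists_edgeDist_eq_of_edgeDist_eq_succ (hirr : MarkovIrreducible Q)
    (he : (chainGraph Q).Adj e.1 e.2) (he' : (chainGraph Q).Adj e'.1 e'.2)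
    (h : edgeDist Q e e' = n + 1) :
    ∃ f, (chainGraph Q).Adj f.1 f.2 ∧ f.1 = e.2 ∧ edgeDist Q f e' = n := by
  obtain ⟨f, hf, hfe, hchain⟩ := (h ▸ isEdgeChain_edgeDist hirr he he').tail
  refine ⟨f, hf, hfe, le_antisymm (edgeDist_le hchain) ?_⟩
  have := edgeDist_le ((isEdgeChain_edgeDist hirr hf he').cons he hfe.symm)
  omega

end EdgeChain

section Weights

variable {X : Type*} [Fintype X] [DecidableEq X] {π : X → ℝ} {Q : X → X → ℝ} {e : X × X}

lemma mem_edges : e ∈ edges Q ↔ e.1 ≠ e.2 ∧ 0 < Q e.1 e.2 := by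
  simp [edges]

lemma mem_edges_iff_adj (hπpos : ∀ x, 0 < π x) (hrev : ∀ x y, π x * Q x y = π y * Q y x) :
    e ∈ edges Q ↔ (chainGraph Q).Adj e.1 e.2 := by
  refine mem_edges.trans ⟨fun h => ⟨h.1, Or.inl h.2⟩, fun ⟨hne, hpos⟩ => ⟨hne, ?_⟩⟩
  refine hpos.elim id fun hyx => pos_of_mul_pos_right ?_ (hπpos e.1).le
  rw [hrev]
  exact mul_pos (hπpos e.2) hyx

lemma edgeWeight_pos (hπpos : ∀ x, 0 < π x) (he : e ∈ edges Q) : 0 < edgeWeight π Q e :=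
  mul_pos (hπpos e.1) (mem_edges.1 he).2

lemma le_jumpRate (hQ : ∀ x y, x ≠ y → 0 ≤ Q x y) {x y : X} (hxy : x ≠ y) :
    Q x y ≤ jumpRate Q x :=
  single_le_sum (fun z hz => hQ x z (ne_of_mem_erase hz).symm) (mem_erase.2 ⟨hxy.symm, mem_univ y⟩)

lemma jumpRate_pos (hQ : ∀ x y, x ≠ y → 0 ≤ Q x y) (he : e ∈ edges Q) : 0 < jumpRate Q e.1 :=
  (mem_edges.1 he).2.trans_le (le_jumpRate hQ (mem_edges.1 he).1)

lemma sum_edgeWeight_filter_snd_le (hQ : ∀ x y, x ≠ y → 0 ≤ Q x y) (hπpos : ∀ x, 0 < π x)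
    (hrev : ∀ x y, π x * Q x y = π y * Q y x) {s : Finset (X × X)} (hs : s ⊆ edges Q) (b : X) :
    ∑ e ∈ s with e.2 = b, edgeWeight π Q e ≤ π b * jumpRate Q b := by
  calc ∑ e ∈ s with e.2 = b, edgeWeight π Q e
      ≤ ∑ e ∈ (univ.erase b).image (·, b), edgeWeight π Q e := by
        refine sum_le_sum_of_subset_of_nonneg ?_ ?_
        · intro e he
          obtain ⟨hes, rfl⟩ := mem_filter.1 he
          exact mem_image.2 ⟨e.1, mem_erase.2 ⟨(mem_edges.1 (hs hes)).1, mem_univ _⟩, rfl⟩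
        · rintro _ hmem -
          obtain ⟨a, ha, rfl⟩ := mem_image.1 hmem
          exact mul_nonneg (hπpos a).le (hQ a b (ne_of_mem_erase ha))
    _ = ∑ a ∈ univ.erase b, π a * Q a b :=
        sum_image fun _ _ _ _ h => Prod.mk_left_injective b h
    _ = π b * jumpRate Q b := by
        simp only [hrev _ b, jumpRate, mul_sum]

lemma setOf_sparsity_finite (Q : X → X → ℝ) :
    {s : ℝ | ∃ x y : X, x ≠ y ∧ 0 < Q x y ∧ s = Q x y / max (jumpRate Q x) (Q y x)}.Finite :=
  (Set.finite_range fun e : X × X => Q e.1 e.2 / max (jumpRate Q e.1) (Q e.2 e.1)).subset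
    (by rintro _ ⟨x, y, -, -, rfl⟩; exact ⟨(x, y), rfl⟩)

lemma sparsity_pos (hQ : ∀ x y, x ≠ y → 0 ≤ Q x y) (he : e ∈ edges Q) : 0 < sparsity Q := by
  obtain ⟨x, y, hxy, hQxy, hs⟩ := Set.Nonempty.csInf_mem
    (by exact ⟨_, e.1, e.2, (mem_edges.1 he).1, (mem_edges.1 he).2, rfl⟩) (setOf_sparsity_finite Q)
  rw [sparsity, hs]
  exact div_pos hQxy (lt_max_of_lt_left (jumpRate_pos hQ (e := (x, y)) (mem_edges.2 ⟨hxy, hQxy⟩)))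

lemma sparsity_mul_jumpRate_le (hQ : ∀ x y, x ≠ y → 0 ≤ Q x y) (he : e ∈ edges Q) :
    sparsity Q * jumpRate Q e.1 ≤ Q e.1 e.2 := by
  have hJ := jumpRate_pos hQ he
  have hle : sparsity Q ≤ Q e.1 e.2 / max (jumpRate Q e.1) (Q e.2 e.1) :=
    csInf_le (setOf_sparsity_finite Q).bddBelow
      ⟨e.1, e.2, (mem_edges.1 he).1, (mem_edges.1 he).2, rfl⟩
  rw [← le_div_iff₀ hJ]
  exact hle.trans (div_le_div_of_nonneg_left (mem_edges.1 he).2.le hJ (le_max_left _ _))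

lemma sparsity_le_one (hQ : ∀ x y, x ≠ y → 0 ≤ Q x y) (he : e ∈ edges Q) : sparsity Q ≤ 1 :=
  le_of_mul_le_mul_right
    (by simpa using (sparsity_mul_jumpRate_le hQ he).trans (le_jumpRate hQ (mem_edges.1 he).1))
    (jumpRate_pos hQ he)

end Weights

section Shells

variable {X : Type*} [Fintype X] [DecidableEq X] {π : X → ℝ} {Q : X → X → ℝ} {e' : X × X}

noncomputable def edgeShell (Q : X → X → ℝ) (e' : X × X) (k : ℕ) : Finset (X × X) :=
  {e ∈ edges Q | edgeDist Q e e' = k}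

variable (hQ : ∀ x y, x ≠ y → 0 ≤ Q x y) (hirr : MarkovIrreducible Q) (hπpos : ∀ x, 0 < π x)
  (hrev : ∀ x y, π x * Q x y = π y * Q y x)
include hQ hirr hπpos hrev

lemma sparsity_mul_sum_edgeShell_succ_le (he' : e' ∈ edges Q) (k : ℕ) :
    sparsity Q * ∑ e ∈ edgeShell Q e' (k + 1), edgeWeight π Q e
      ≤ ∑ e ∈ edgeShell Q e' k, edgeWeight π Q e := by
  have hp := sparsity_pos hQ he'
  have hadj := fun {e : X × X} => (mem_edges_iff_adj (e := e) hπpos hrev).1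
  have hweight : ∀ e ∈ edges Q, 0 ≤ edgeWeight π Q e := fun e he => (edgeWeight_pos hπpos he).le
  set B := (edgeShell Q e' (k + 1)).image Prod.snd
  have hout : ∀ b ∈ B, sparsity Q * (π b * jumpRate Q b)
      ≤ ∑ f ∈ edgeShell Q e' k with f.1 = b, edgeWeight π Q f := by
    intro b hb
    obtain ⟨e, he, rfl⟩ := mem_image.1 hb
    obtain ⟨he, hd⟩ := mem_filter.1 he
    obtain ⟨f, hf, hfe, hfd⟩ :=
      exists_edgeDist_eq_of_edgeDist_eq_succ hirr (hadj he) (hadj he') hd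
    have hfE : f ∈ edges Q := (mem_edges_iff_adj hπpos hrev).2 hf
    calc sparsity Q * (π e.2 * jumpRate Q e.2) = π f.1 * (sparsity Q * jumpRate Q f.1) := by
          rw [hfe]; ring
      _ ≤ edgeWeight π Q f := mul_le_mul_of_nonneg_left (sparsity_mul_jumpRate_le hQ hfE)
          (hπpos _).le
      _ ≤ ∑ f ∈ edgeShell Q e' k with f.1 = e.2, edgeWeight π Q f :=
          single_le_sum (fun g hg => hweight g (mem_filter.1 (mem_filter.1 hg).1).1)
            (mem_filter.2 ⟨mem_filter.2 ⟨hfE, hfd⟩, hfe⟩)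
  calc sparsity Q * ∑ e ∈ edgeShell Q e' (k + 1), edgeWeight π Q e
      = ∑ b ∈ B, sparsity Q * ∑ e ∈ edgeShell Q e' (k + 1) with e.2 = b, edgeWeight π Q e := by
        rw [← mul_sum, sum_fiberwise_of_maps_to fun e he => mem_image_of_mem _ he]
    _ ≤ ∑ b ∈ B, sparsity Q * (π b * jumpRate Q b) :=
        sum_le_sum fun b _ => mul_le_mul_of_nonneg_left
          (sum_edgeWeight_filter_snd_le hQ hπpos hrev (filter_subset _ _) b) hp.le
    _ ≤ ∑ b ∈ B, ∑ f ∈ edgeShell Q e' k with f.1 = b, edgeWeight π Q f := sum_le_sum hout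
    _ = ∑ f ∈ edgeShell Q e' k with f.1 ∈ B, edgeWeight π Q f := sum_fiberwise_eq_sum_filter _ _ _ _
    _ ≤ ∑ e ∈ edgeShell Q e' k, edgeWeight π Q e :=
        sum_le_sum_of_subset_of_nonneg (filter_subset _ _)
          fun e he _ => hweight e (mem_filter.1 he).1

lemma sum_edgeShell_le (he' : e' ∈ edges Q) (k : ℕ) :
    ∑ e ∈ edgeShell Q e' k, edgeWeight π Q e ≤ edgeWeight π Q e' * (sparsity Q)⁻¹ ^ k := by
  induction k with
  | zero =>
    have hsub : edgeShell Q e' 0 ⊆ {e'} := fun e he => mem_singleton.2 <|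
      eq_of_edgeDist_eq_zero hirr ((mem_edges_iff_adj hπpos hrev).1 (mem_filter.1 he).1)
        ((mem_edges_iff_adj hπpos hrev).1 he') (mem_filter.1 he).2
    simpa using sum_le_sum_of_subset_of_nonneg hsub fun e he _ =>
      (edgeWeight_pos hπpos (mem_singleton.1 he ▸ he')).le
  | succ k ih =>
    have hp := sparsity_pos hQ he'
    calc ∑ e ∈ edgeShell Q e' (k + 1), edgeWeight π Q e
        = (sparsity Q)⁻¹ * (sparsity Q * ∑ e ∈ edgeShell Q e' (k + 1), edgeWeight π Q e) := by
          field_simp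
      _ ≤ (sparsity Q)⁻¹ * (edgeWeight π Q e' * (sparsity Q)⁻¹ ^ k) :=
          mul_le_mul_of_nonneg_left
            ((sparsity_mul_sum_edgeShell_succ_le hQ hirr hπpos hrev he' k).trans ih)
            (inv_nonneg.2 hp.le)
      _ = edgeWeight π Q e' * (sparsity Q)⁻¹ ^ (k + 1) := by ring

end Shells

variable {X : Type*} [Fintype X] [DecidableEq X] [Nonempty X]

theorem kappa_le_general
    (π : X → ℝ) (Q : X → X → ℝ)
    (hQ : ∀ x y : X, x ≠ y → 0 ≤ Q x y)
    (hirr : MarkovIrreducible Q)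
    (hπpos : ∀ x : X, 0 < π x)
    (hrev : ∀ x y : X, π x * Q x y = π y * Q y x)
 :
     kappa π Q (4 / sparsity Q ^ 2) ≤ 4 / 3 := by
  refine Real.sSup_le ?_ (by norm_num)
  rintro _ ⟨e', he', rfl⟩
  have hp := sparsity_pos hQ he'
  have hp1 := sparsity_le_one hQ he'
  have hc := edgeWeight_pos hπpos he'
  have hratio : (sparsity Q)⁻¹ / (4 / sparsity Q ^ 2) = sparsity Q / 4 := by
    field_simp
  have hsum := sum_mul_zpow_neg_le_of_sum_fiber_le (edges Q) (edgeWeight π Q) (edgeDist Q · e')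
    (r := 4 / sparsity Q ^ 2) hc.le (inv_nonneg.2 hp.le)
    ((div_lt_one (by positivity)).1 (by rw [hratio]; linarith))
    (sum_edgeShell_le hQ hirr hπpos hrev he')
  rw [hratio] at hsum
  calc 1 / edgeWeight π Q e' * ∑ e ∈ edges Q,
        edgeWeight π Q e * (4 / sparsity Q ^ 2) ^ (-(edgeDist Q e e' : ℤ))
      ≤ 1 / edgeWeight π Q e' * (edgeWeight π Q e' / (1 - sparsity Q / 4)) :=
        mul_le_mul_of_nonneg_left hsum (by positivity)
    _ = 1 / (1 - sparsity Q / 4) := by field_simp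
    _ ≤ 4 / 3 := by rw [div_le_div_iff₀ (by linarith) (by norm_num)]; linarith

theorem kappa_le
    (π : X → ℝ) (Q : X → X → ℝ)
    (hQ : ∀ x y : X, x ≠ y → 0 ≤ Q x y)
    (hQsum : ∀ x : X, ∑ y : X, Q x y = 0)
    (hirr : MarkovIrreducible Q)
    (hπpos : ∀ x : X, 0 < π x)
    (hπsum : ∑ x : X, π x = 1)
    (hrev : ∀ x y : X, π x * Q x y = π y * Q y x)
 :
     kappa π Q (4 / sparsity Q ^ 2) ≤ 4 / 3 :=
  kappa_le_general π Q hQ hirr hπpos hrev
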